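/- For primitive words w and v that are not conjugate, there exist n₀, m₀ ∈ ℕ such that for all n > n₀ and m > m₀, the set of common factors of w^n and v^m equals the set of common factors of w^{n₀} and v^{m₀}. -/

import Mathlib

/-- `wpow w n` is the `n`-fold concatenation `w^n` of the word `w` (a list), with `w^0 = []`. -/
def wpow {α : Type*} (w : List α) (n : ℕ) : List α := (List.replicate n w).flatten

/-- A nonempty word is primitive if it is not a power of any word other than itself. -/
def Primitive {α : Type*} (w : List α) : Prop :=
  w ≠ [] ∧ ∀ (z : List α) (m : ℕ), z ≠ [] → w = wpow z m → w = z

/-- `expw w u` is the maximal `m` such that `w^m` is a factor of `u`. -/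
noncomputable def expw {α : Type*} (w u : List α) : ℕ := sSup {m : ℕ | wpow w m <:+: u}

/-- Two words are conjugate if `w = x·y` and `v = y·x`. -/
def Conj {α : Type*} (w v : List α) : Prop := ∃ x y : List α, w = x ++ y ∧ v = y ++ x

/-!
A common factor `u` of `w^n` and `v^m` has periods `|w|` and `|v|`. If `u` were as long as
`2 * max |w| |v|`, the Fine–Wilf theorem would give it the period `gcd |w| |v|`; since `u` then
contains a full copy of `w` and of `v`, primitivity forces `|w| = gcd |w| |v| = |v|`, and `v`,
a factor of `w^n` of length `|w|`, would be a rotation of `w`. So common factors are shorter than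
`2 * max |w| |v|`, and a factor of length `ℓ` of some power of `w` is already a factor of
`w^(ℓ + 1)`.
-/

section Powers

variable {α : Type*}

theorem wpow_succ (w : List α) (n : ℕ) : wpow w (n + 1) = w ++ wpow w n := by
  simp [wpow, List.replicate_succ]

theorem wpow_add (w : List α) (a b : ℕ) : wpow w (a + b) = wpow w a ++ wpow w b := by
  rw [wpow, wpow, wpow, List.replicate_add, List.flatten_append]

theorem length_wpow (w : List α) (n : ℕ) : (wpow w n).length = n * w.length := by
  simp [wpow]

theorem wpow_infix_wpow {w : List α} {a b : ℕ} (h : a ≤ b) : wpow w a <:+: wpow w b :=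
  ⟨[], wpow w (b - a), by rw [List.nil_append, ← wpow_add, Nat.add_sub_cancel' h]⟩

theorem getElem?_wpow (w : List α) {n i : ℕ} (hi : i < n * w.length) :
    (wpow w n)[i]? = w[i % w.length]? := by
  induction n generalizing i with
  | zero => omega
  | succ n ih =>
    rw [wpow_succ]
    rcases lt_or_ge i w.length with h | h
    · rw [List.getElem?_append_left h, Nat.mod_eq_of_lt h]
    · rw [List.getElem?_append_right h, ih (by rw [Nat.succ_mul] at hi; omega),
        ← Nat.mod_eq_sub_mod h]

theorem hasPeriod_wpow (w : List α) (n : ℕ) : (wpow w n).HasPeriod w.length := by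
  refine List.hasPeriod_iff_forall_getElem?_mod.2 fun i hi => ?_
  rw [length_wpow] at hi
  rw [getElem?_wpow w hi, getElem?_wpow w (lt_of_le_of_lt (Nat.mod_le _ _) hi), Nat.mod_mod]

theorem eq_wpow_take_of_hasPeriod {w : List α} {g : ℕ} (hper : w.HasPeriod g)
    (hg : g ∣ w.length) : w = wpow (w.take g) (w.length / g) := by
  rcases Nat.eq_zero_or_pos w.length with hw | hw
  · simp_all [wpow]
  have hg0 : 0 < g := Nat.pos_of_dvd_of_pos hg hw
  have hlen : (w.take g).length = g := List.length_take_of_le (Nat.le_of_dvd hw hg)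
  have hlen' : w.length / g * (w.take g).length = w.length := by
    rw [hlen, Nat.div_mul_cancel hg]
  refine List.ext_getElem? fun i => ?_
  rcases lt_or_ge i w.length with hi | hi
  · rw [getElem?_wpow _ (by rwa [hlen']), hlen, List.getElem?_take_of_lt (Nat.mod_lt _ hg0)]
    exact List.hasPeriod_iff_forall_getElem?_mod.1 hper i hi
  · rw [List.getElem?_eq_none hi, List.getElem?_eq_none (by rwa [length_wpow, hlen'])]

theorem Primitive.eq_of_hasPeriod {w : List α} (hw : Primitive w) {g : ℕ}
    (hper : w.HasPeriod g) (hg : g ∣ w.length) : g = w.length := by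
  have hw0 : 0 < w.length := List.length_pos_iff.2 hw.1
  have hg0 : 0 < g := Nat.pos_of_dvd_of_pos hg hw0
  have htake : w.take g ≠ [] := List.ne_nil_of_length_pos (by rw [List.length_take]; omega)
  have := congrArg List.length (hw.2 _ _ htake (eq_wpow_take_of_hasPeriod hper hg))
  rw [List.length_take] at this
  exact le_antisymm (Nat.le_of_dvd hw0 hg) (by omega)

theorem exists_getElem?_eq_of_infix_wpow {w u : List α} {n : ℕ} (hu : u <:+: wpow w n) :
    ∃ s, ∀ j < u.length, u[j]? = w[(s + j) % w.length]? := by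
  obtain ⟨s, hs, h⟩ := List.infix_iff_getElem?.1 hu
  rw [length_wpow] at hs
  refine ⟨s, fun j hj => ?_⟩
  rw [List.getElem?_eq_getElem hj, ← h j hj, getElem?_wpow w (by omega), Nat.add_comm]

theorem infix_wpow_length_succ {w u : List α} {n : ℕ} (hu : u <:+: wpow w n) :
    u <:+: wpow w (u.length + 1) := by
  rcases Nat.eq_zero_or_pos w.length with hw | hw
  · have := hu.length_le
    rw [length_wpow, hw, Nat.mul_zero, Nat.le_zero, List.length_eq_zero_iff] at this
    exact this ▸ List.nil_infix
  obtain ⟨s, hs⟩ := exists_getElem?_eq_of_infix_wpow hu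
  have hlen : u.length + s % w.length ≤ (u.length + 1) * w.length := by
    have := Nat.mod_lt s hw
    have := Nat.le_mul_of_pos_right u.length hw
    rw [Nat.succ_mul]
    omega
  refine List.infix_iff_getElem?.2 ⟨s % w.length, by rwa [length_wpow], fun j hj => ?_⟩
  rw [← List.getElem?_eq_getElem hj, hs j hj, getElem?_wpow w (by omega), Nat.add_mod_mod,
    Nat.add_comm j s]

theorem infix_of_infix_wpow {w u : List α} {n : ℕ} (hu : u <:+: wpow w n)
    (hlen : 2 * w.length ≤ u.length) : w <:+: u := by
  rcases Nat.eq_zero_or_pos w.length with hw | hw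
  · exact List.length_eq_zero_iff.1 hw ▸ List.nil_infix
  obtain ⟨s, hs⟩ := exists_getElem?_eq_of_infix_wpow hu
  -- a full copy of `w` starts at the first multiple of `|w|` after the offset `s`
  have hk : w.length * (s / w.length + 1) = w.length * (s / w.length) + w.length := Nat.mul_succ ..
  have := Nat.div_add_mod s w.length
  have := Nat.mod_lt s hw
  refine List.infix_iff_getElem?.2 ⟨w.length * (s / w.length + 1) - s, by omega, fun j hj => ?_⟩
  rw [← List.getElem?_eq_getElem hj, hs _ (by omega),
    show s + (j + (w.length * (s / w.length + 1) - s)) = w.length * (s / w.length + 1) + j by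
      omega,
    Nat.mul_add_mod, Nat.mod_eq_of_lt hj]

theorem isRotated_of_infix_wpow {w v : List α} {n : ℕ} (hv : v <:+: wpow w n)
    (hlen : v.length = w.length) : w ~r v := by
  obtain ⟨s, hs⟩ := exists_getElem?_eq_of_infix_wpow hv
  refine ⟨s, List.ext_getElem? fun j => ?_⟩
  rcases lt_or_ge j w.length with hj | hj
  · rw [List.getElem?_rotate hj, hs j (hlen ▸ hj), Nat.add_comm]
  · rw [List.getElem?_eq_none (by rwa [List.length_rotate]), List.getElem?_eq_none (by omega)]

theorem conj_of_isRotated {w v : List α} (h : w ~r v) : Conj w v := by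
  obtain ⟨k, hk, rfl⟩ := List.isRotated_iff_mod.1 h
  exact ⟨w.take k, w.drop k, (List.take_append_drop k w).symm, List.rotate_eq_drop_append_take hk⟩

theorem length_lt_of_infix_wpow_of_infix_wpow {w v u : List α} {n m : ℕ} (hw : Primitive w)
    (hv : Primitive v) (hnc : ¬ Conj w v) (huw : u <:+: wpow w n) (huv : u <:+: wpow v m) :
    u.length < 2 * max w.length v.length := by
  by_contra! hlen
  have hgcd : u.HasPeriod (w.length.gcd v.length) :=
    ((hasPeriod_wpow w n).infix huw).gcd ((hasPeriod_wpow v m).infix huv) (by omega)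
  have hgw : w.length.gcd v.length = w.length :=
    hw.eq_of_hasPeriod (hgcd.infix (infix_of_infix_wpow huw (by omega))) (Nat.gcd_dvd_left _ _)
  have hgv : w.length.gcd v.length = v.length :=
    hv.eq_of_hasPeriod (hgcd.infix (infix_of_infix_wpow huv (by omega))) (Nat.gcd_dvd_right _ _)
  have hvw : v <:+: wpow w n := (infix_of_infix_wpow huv (by omega)).trans huw
  exact hnc (conj_of_isRotated (isRotated_of_infix_wpow hvw (hgv.symm.trans hgw)))

end Powers

theorem stmt_5 {α : Type*} (w v : List α) (hw : Primitive w) (hv : Primitive v)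
    (hnc : ¬ Conj w v) :
    ∃ n₀ m₀ : ℕ, ∀ n > n₀, ∀ m > m₀,
      {u : List α | u <:+: wpow w n ∧ u <:+: wpow v m} =
        {u : List α | u <:+: wpow w n₀ ∧ u <:+: wpow v m₀} := by
  refine ⟨2 * max w.length v.length, 2 * max w.length v.length, fun n hn m hm => ?_⟩
  ext u
  constructor
  · rintro ⟨huw, huv⟩
    have hlen := length_lt_of_infix_wpow_of_infix_wpow hw hv hnc huw huv
    exact ⟨(infix_wpow_length_succ huw).trans (wpow_infix_wpow hlen),
      (infix_wpow_length_succ huv).trans (wpow_infix_wpow hlen)⟩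
  · rintro ⟨huw, huv⟩
    exact ⟨huw.trans (wpow_infix_wpow hn.le), huv.trans (wpow_infix_wpow hm.le)⟩
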